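/- Let k ∈ ℂ and let 𝒢 : ℤ² → ℂ satisfy (Δ_d + k²)𝒢(x) = δ_{x,0} for all x ∈ ℤ². Let R ⊂ ℤ² be a finite region and let u : R → ℂ be a solution of the discrete Helmholtz equation (Δ_d + k²)u(x) = 0 for all x ∈ R̊. Then for every x ∈ R̊, u(x) = Σ_{j=1}^{6} Σ_{y∈(∂R)_j} ( u(y)·(𝒢(x−y) − 𝒢(x−y+e_j)) − 𝒢(x−y)·(u(y) − u(y−e_j)) ). -/
import Mathlib


open Finset

/-- The six neighbour directions `e₁, e₂, e₃ = e₁ − e₂, e₄ = −e₁, e₅ = −e₂, e₆ = −e₃`. -/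
def dir : Fin 6 → ℤ × ℤ := ![(1, 0), (0, 1), (1, -1), (-1, 0), (0, -1), (-1, 1)]

/-- The 7-point discrete Laplacian of the triangular lattice on `ℤ²`:
`Δ_d u(x) = Σ_{j=1}^{6} u(x + e_j) − 6u(x)`. -/
noncomputable def discreteLaplacian (u : ℤ × ℤ → ℂ) (x : ℤ × ℤ) : ℂ :=
  (∑ j : Fin 6, u (x + dir j)) - 6 * u x

lemma dir_add_three (j : Fin 6) : dir (j + 3) = - dir j := by
  fin_cases j <;> decide

lemma add_three_ne (j : Fin 6) : j + 3 ≠ j := by fin_cases j <;> decide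

lemma add_three_add_three (j : Fin 6) : j + 3 + 3 = j := by fin_cases j <;> decide

lemma sum_dir_neg (G : ℤ × ℤ → ℂ) (w : ℤ × ℤ) :
    (∑ j : Fin 6, G (w - dir j)) = ∑ j : Fin 6, G (w + dir j) := by
  have h : ∀ j : Fin 6, w - dir j = w + dir (j + 3) := by
    intro j; rw [dir_add_three, sub_eq_add_neg]
  simp_rw [h]
  exact Fintype.sum_equiv (Equiv.addRight (3 : Fin 6)) _ _ (fun j => rfl)

/-- Discrete Green's representation formula for a solution of the discrete
Helmholtz equation on a finite region `R = R̊ ∪ ∂R`. -/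
theorem discrete_green_representation_helmholtz
    (k : ℂ) (G : ℤ × ℤ → ℂ)
    (hG : ∀ x : ℤ × ℤ, discreteLaplacian G x + k ^ 2 * G x = if x = (0, 0) then 1 else 0)
    (Rint Rbd : Finset (ℤ × ℤ))
    (hdisj : Disjoint Rint Rbd)
    (hRint : Rint.Nonempty) (hRbd : Rbd.Nonempty)
    (hinterior : ∀ x ∈ Rint, ∀ j : Fin 6, x + dir j ∈ Rint ∪ Rbd)
    (hboundary : ∀ y ∈ Rbd, ∃ j : Fin 6, y - dir j ∈ Rint)
    (u : ℤ × ℤ → ℂ)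
    (hu : ∀ x ∈ Rint, discreteLaplacian u x + k ^ 2 * u x = 0) :
    ∀ x ∈ Rint,
      u x =
        ∑ j : Fin 6, ∑ y ∈ Rbd.filter (fun y => y - dir j ∈ Rint),
          (u y * (G (x - y) - G (x - y + dir j)) - G (x - y) * (u y - u (y - dir j))) := by
  intro x hx
  classical
  set v : ℤ × ℤ → ℂ := fun z => G (x - z) with hv
  -- v satisfies the Helmholtz equation with source at x
  have hvG : ∀ z : ℤ × ℤ, (∑ j : Fin 6, v (z + dir j)) - 6 * v z + k ^ 2 * v z
      = if z = x then 1 else 0 := by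
    intro z
    have h1 : (∑ j : Fin 6, v (z + dir j)) = ∑ j : Fin 6, G (x - z + dir j) := by
      rw [← sum_dir_neg G (x - z)]
      refine Finset.sum_congr rfl fun j _ => ?_
      simp only [hv]
      congr 1
      ring
    have h2 := hG (x - z)
    rw [discreteLaplacian] at h2
    have h3 : (x - z = ((0, 0) : ℤ × ℤ)) ↔ z = x := by
      rw [show ((0, 0) : ℤ × ℤ) = 0 from rfl, sub_eq_zero, eq_comm]
    rw [h1]
    simp only [hv]
    rw [h2]
    simp only [Prod.mk_zero_zero] at h3 ⊢
    exact if_congr h3 rfl rfl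
  set W : Fin 6 → ℤ × ℤ → ℂ := fun j z => v z * u (z + dir j) - u z * v (z + dir j) with hW
  have hWsym : ∀ (j : Fin 6) (z : ℤ × ℤ), W (j + 3) (z + dir j) = - W j z := by
    intro j z
    simp only [hW, dir_add_three, add_neg_cancel_right]
    ring
  -- E1 : the double sum equals -u x
  have E1 : ∑ z ∈ Rint, ∑ j : Fin 6, W j z = - u x := by
    have hpt : ∀ z ∈ Rint, ∑ j : Fin 6, W j z = if z = x then - u z else 0 := by
      intro z hz
      have h1 := hu z hz
      rw [discreteLaplacian] at h1
      have h2 := hvG z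
      have hu' : (∑ j : Fin 6, u (z + dir j)) = 6 * u z - k ^ 2 * u z := by
        linear_combination h1
      have hv' : (∑ j : Fin 6, v (z + dir j))
          = 6 * v z - k ^ 2 * v z + (if z = x then 1 else 0) := by
        linear_combination h2
      simp only [hW]
      rw [Finset.sum_sub_distrib, ← Finset.mul_sum, ← Finset.mul_sum, hu', hv']
      by_cases h : z = x <;> simp [h] <;> ring
    rw [Finset.sum_congr rfl hpt, Finset.sum_ite_eq' Rint x, if_pos hx]
  -- E2 : split the sum over interior/boundary neighbours
  have E2 : ∑ z ∈ Rint, ∑ j : Fin 6, W j z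
      = ∑ j : Fin 6, ((∑ z ∈ Rint.filter (fun z => z + dir j ∈ Rint), W j z)
          + ∑ z ∈ Rint.filter (fun z => z + dir j ∈ Rbd), W j z) := by
    rw [Finset.sum_comm]
    refine Finset.sum_congr rfl fun j _ => ?_
    rw [← Finset.sum_filter_add_sum_filter_not Rint (fun z => z + dir j ∈ Rint)]
    congr 1
    refine Finset.sum_congr ?_ (fun _ _ => rfl)
    ext z
    simp only [Finset.mem_filter]
    constructor
    · rintro ⟨hz, hnz⟩
      refine ⟨hz, ?_⟩
      rcases Finset.mem_union.mp (hinterior z hz j) with h | h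
      · exact absurd h hnz
      · exact h
    · rintro ⟨hz, hb⟩
      exact ⟨hz, fun hi => Finset.disjoint_left.mp hdisj hi hb⟩
  -- E3 : interior-interior edges cancel
  have E3 : ∑ j : Fin 6, ∑ z ∈ Rint.filter (fun z => z + dir j ∈ Rint), W j z = 0 := by
    have hrw : ∀ j : Fin 6, ∑ z ∈ Rint.filter (fun z => z + dir j ∈ Rint), W j z
        = ∑ z ∈ Rint, if z + dir j ∈ Rint then W j z else 0 := fun j =>
      Finset.sum_filter _ _
    simp_rw [hrw]
    rw [← Finset.sum_product']
    refine Finset.sum_involution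
      (fun p _ => if p.2 + dir p.1 ∈ Rint then (p.1 + 3, p.2 + dir p.1) else p)
      ?_ ?_ ?_ ?_
    · intro p hp
      by_cases h : p.2 + dir p.1 ∈ Rint
      · have h2 : p.2 + dir p.1 + dir (p.1 + 3) = p.2 := by
          rw [dir_add_three, add_neg_cancel_right]
        have hmem : p.2 ∈ Rint := (Finset.mem_product.mp hp).2
        simp only [if_pos h]
        rw [h2, if_pos hmem, hWsym]
        ring
      · simp [h]
    · intro p hp hfp
      by_cases h : p.2 + dir p.1 ∈ Rint
      · rw [if_pos h]
        intro heq
        exact add_three_ne p.1 (congrArg Prod.fst heq)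
      · simp [h] at hfp
    · intro p hp
      by_cases h : p.2 + dir p.1 ∈ Rint
      · rw [if_pos h]
        exact Finset.mem_product.mpr ⟨Finset.mem_univ _, h⟩
      · rwa [if_neg h]
    · intro p hp
      by_cases h : p.2 + dir p.1 ∈ Rint
      · have h2 : p.2 + dir p.1 + dir (p.1 + 3) = p.2 := by
          rw [dir_add_three, add_neg_cancel_right]
        have hmem : p.2 ∈ Rint := (Finset.mem_product.mp hp).2
        simp only [if_pos h]
        rw [h2, if_pos hmem, add_three_add_three]
      · simp only [if_neg h]
  -- E4 : reindex the boundary edges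
  have E4 : ∀ j : Fin 6, ∑ z ∈ Rint.filter (fun z => z + dir j ∈ Rbd), W j z
      = ∑ y ∈ Rbd.filter (fun y => y - dir j ∈ Rint), W j (y - dir j) := by
    intro j
    refine Finset.sum_nbij' (fun z => z + dir j) (fun y => y - dir j) ?_ ?_ ?_ ?_ ?_
    · intro z hz
      simp only [Finset.mem_filter] at hz ⊢
      exact ⟨hz.2, by rw [add_sub_cancel_right]; exact hz.1⟩
    · intro y hy
      simp only [Finset.mem_filter] at hy ⊢
      exact ⟨hy.2, by rw [sub_add_cancel]; exact hy.1⟩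
    · intro z _; rw [add_sub_cancel_right]
    · intro y _; rw [sub_add_cancel]
    · intro z _; rw [add_sub_cancel_right]
  -- combine
  have key : - u x = ∑ j : Fin 6, ∑ y ∈ Rbd.filter (fun y => y - dir j ∈ Rint),
      W j (y - dir j) := by
    rw [← E1, E2, Finset.sum_add_distrib, E3, zero_add]
    exact Finset.sum_congr rfl fun j _ => E4 j
  have hterm : ∀ (j : Fin 6) (y : ℤ × ℤ),
      u y * (G (x - y) - G (x - y + dir j)) - G (x - y) * (u y - u (y - dir j))
        = - W j (y - dir j) := by
    intro j y
    have h1 : x - (y - dir j) = x - y + dir j := by ring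
    simp only [hW, sub_add_cancel, hv, h1]
    ring
  calc u x = - - u x := by ring
    _ = ∑ j : Fin 6, ∑ y ∈ Rbd.filter (fun y => y - dir j ∈ Rint),
          (u y * (G (x - y) - G (x - y + dir j)) - G (x - y) * (u y - u (y - dir j))) := by
        rw [key]
        simp_rw [hterm]
        rw [← Finset.sum_neg_distrib]
        exact Finset.sum_congr rfl fun j _ => by rw [← Finset.sum_neg_distrib]
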